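/- Theorem 1 (invariance of the SRA solution under the transformation F_{s,Δ}): let C be a diagonal positive definite 2m×2m real matrix with C_{jj} = C_{j+m,j+m} for j = 1,…,m. Interpret the real 2m-dimensional stacking of a complex m-vector w as (Re w, Im w). Then for any s > 0 and Δ ∈ ℝ, the Mahalanobis constraint set {x ≥ 0 : (Φx−v)ᵀC⁻¹(Φx−v) ≤ ε²‖v‖²} equals the set {x ≥ 0 : (Φ'x−v')ᵀC⁻¹(Φ'x−v') ≤ ε²s²‖v‖²}, where Φ' and v' are the stackings of F_{s,Δ}Φ_c and F_{s,Δ}v_c (Φ_c, v_c the complex versions). Consequently, the minimizer of ‖x‖₁ over the first set equals the minimizer over the set with v replaced by F_{s,Δ}v and Φ by F_{s,Δ}Φ. -/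

import Mathlib

open Complex Real

/-- The matrix F_{s,Δ} = s · diag(e^{−2πiΔ/λ₁},…,e^{−2πiΔ/λ_m}). -/
noncomputable def Fmat {m : ℕ} (s Δ : ℝ) (lam : Fin m → ℝ) : Matrix (Fin m) (Fin m) ℂ :=
  Matrix.diagonal (fun k => (s : ℂ) * Complex.exp (-(2 * π * Complex.I * Δ) / (lam k)))

/-- Stacking of a complex m-vector into ℝ^{2m}: real parts first, then imaginary parts. -/
def stack {m : ℕ} (w : Fin m → ℂ) : (Fin m ⊕ Fin m) → ℝ :=
  Sum.elim (fun j => (w j).re) (fun j => (w j).im)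

/-- Feasible set of the stacked SRA problem with Mahalanobis constraint and
right-hand side `rhs`. -/
def feas {m n : ℕ} (Φc : Matrix (Fin m) (Fin n) ℂ) (vc : Fin m → ℂ)
    (C : Matrix (Fin m ⊕ Fin m) (Fin m ⊕ Fin m) ℝ) (rhs : ℝ) : Set (Fin n → ℝ) :=
  {x | (∀ i, 0 ≤ x i) ∧
    dotProduct (stack (Φc.mulVec (fun j => (x j : ℂ)) - vc))
      ((C⁻¹).mulVec (stack (Φc.mulVec (fun j => (x j : ℂ)) - vc))) ≤ rhs}

/-!
`F_{s,Δ}` multiplies each complex coordinate by `s` times a phase of modulus one. Because `C`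
weights the real and imaginary part of each coordinate equally, the Mahalanobis form of a stacked
vector is a weighted sum of the `|w_j|²`, so `F_{s,Δ}` scales it by exactly `s²`; the constraint
sets, and with them the `ℓ¹` minimizers, therefore coincide.
-/

open Matrix

section

variable {m : ℕ}

theorem stack_dotProduct_diagonal_mulVec_stack (c : Fin m → ℝ) (u : Fin m → ℂ) :
    stack u ⬝ᵥ diagonal (Sum.elim c c) *ᵥ stack u = ∑ j, c j * normSq (u j) := by
  simp only [dotProduct, mulVec_diagonal, Fintype.sum_sum_type, stack, Sum.elim_inl,
    Sum.elim_inr, normSq_apply, ← Finset.sum_add_distrib]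
  exact Finset.sum_congr rfl fun j _ => by ring

theorem inv_diagonal_sum_elim {c : Fin m → ℝ} (hc : ∀ j, c j ≠ 0) :
    (diagonal (Sum.elim c c))⁻¹ = diagonal (Sum.elim c⁻¹ c⁻¹) := by
  refine inv_eq_right_inv ?_
  rw [diagonal_mul_diagonal, ← diagonal_one]
  congr 1
  ext (j | j) <;> simp [hc j]

theorem normSq_Fmat_mulVec (s Δ : ℝ) (lam : Fin m → ℝ) (w : Fin m → ℂ) (j : Fin m) :
    normSq ((Fmat s Δ lam *ᵥ w) j) = s ^ 2 * normSq (w j) := by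
  -- the phase factor has purely imaginary exponent, hence modulus one
  have hphase : normSq (exp (-(2 * π * I * Δ) / (lam j : ℂ))) = 1 := by
    rw [← Complex.sq_norm, norm_exp, div_ofReal_re]
    simp
  simp only [Fmat, mulVec_diagonal, normSq_mul, hphase, normSq_ofReal]
  ring

theorem stack_Fmat_mahalanobis (s Δ : ℝ) (lam : Fin m → ℝ) {c : Fin m → ℝ} (hc : ∀ j, c j ≠ 0)
    (w : Fin m → ℂ) :
    let C := diagonal (Sum.elim c c)
    stack (Fmat s Δ lam *ᵥ w) ⬝ᵥ C⁻¹ *ᵥ stack (Fmat s Δ lam *ᵥ w)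
      = s ^ 2 * (stack w ⬝ᵥ C⁻¹ *ᵥ stack w) := by
  simp only [inv_diagonal_sum_elim hc, stack_dotProduct_diagonal_mulVec_stack,
    normSq_Fmat_mulVec, Finset.mul_sum]
  exact Finset.sum_congr rfl fun j _ => by ring

end

theorem feas_mul_eq {m n : ℕ} (A : Matrix (Fin m) (Fin m) ℂ) (Φc : Matrix (Fin m) (Fin n) ℂ)
    (vc : Fin m → ℂ) (C : Matrix (Fin m ⊕ Fin m) (Fin m ⊕ Fin m) ℝ) {k : ℝ} (hk : 0 < k)
    (hA : ∀ w, stack (A *ᵥ w) ⬝ᵥ C⁻¹ *ᵥ stack (A *ᵥ w) = k * (stack w ⬝ᵥ C⁻¹ *ᵥ stack w))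
    (r : ℝ) :
    feas (A * Φc) (A *ᵥ vc) C (k * r) = feas Φc vc C r := by
  ext x
  simp only [feas, Set.mem_ofPred_eq, ← mulVec_mulVec, ← mulVec_sub, hA,
    mul_le_mul_iff_of_pos_left hk]

theorem stmt_4_general {m n : ℕ} (Φc : Matrix (Fin m) (Fin n) ℂ) (vc : Fin m → ℂ)
    (lam : Fin m → ℝ)
    (c : Fin m → ℝ) (hc : ∀ j, 0 < c j)
    (C : Matrix (Fin m ⊕ Fin m) (Fin m ⊕ Fin m) ℝ)
    (hC : C = Matrix.diagonal (Sum.elim c c))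
    (ε : ℝ) (s Δ : ℝ) (hs : 0 < s) :
    feas ((Fmat s Δ lam) * Φc) ((Fmat s Δ lam).mulVec vc) C
        (ε ^ 2 * s ^ 2 * ∑ k, ‖vc k‖ ^ 2)
      = feas Φc vc C (ε ^ 2 * ∑ k, ‖vc k‖ ^ 2) ∧
    ∀ xstar : Fin n → ℝ,
      (xstar ∈ feas Φc vc C (ε ^ 2 * ∑ k, ‖vc k‖ ^ 2) ∧
        ∀ y ∈ feas Φc vc C (ε ^ 2 * ∑ k, ‖vc k‖ ^ 2), ∑ i, |xstar i| ≤ ∑ i, |y i|)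
      ↔
      (xstar ∈ feas ((Fmat s Δ lam) * Φc) ((Fmat s Δ lam).mulVec vc) C
          (ε ^ 2 * s ^ 2 * ∑ k, ‖vc k‖ ^ 2) ∧
        ∀ y ∈ feas ((Fmat s Δ lam) * Φc) ((Fmat s Δ lam).mulVec vc) C
          (ε ^ 2 * s ^ 2 * ∑ k, ‖vc k‖ ^ 2), ∑ i, |xstar i| ≤ ∑ i, |y i|) := by
  have hfeas : feas ((Fmat s Δ lam) * Φc) ((Fmat s Δ lam).mulVec vc) C
      (ε ^ 2 * s ^ 2 * ∑ k, ‖vc k‖ ^ 2) = feas Φc vc C (ε ^ 2 * ∑ k, ‖vc k‖ ^ 2) := by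
    subst hC
    rw [show ε ^ 2 * s ^ 2 * ∑ k, ‖vc k‖ ^ 2 = s ^ 2 * (ε ^ 2 * ∑ k, ‖vc k‖ ^ 2) by ring]
    exact feas_mul_eq _ Φc vc _ (by positivity)
      (stack_Fmat_mahalanobis s Δ lam fun j => (hc j).ne') _
  exact ⟨hfeas, fun xstar => by rw [hfeas]⟩

/-- Theorem 1: with a diagonal covariance having equal variances
for the real and imaginary parts of each frequency, the feasible set is invariant
under the transformation F_{s,Δ} (with the tolerance scaled by s²), and hence so
is the L1 minimizer. -/
theorem stmt_4 {m n : ℕ} (Φc : Matrix (Fin m) (Fin n) ℂ) (vc : Fin m → ℂ)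
    (lam : Fin m → ℝ) (hlam : ∀ k, 0 < lam k)
    (c : Fin m → ℝ) (hc : ∀ j, 0 < c j)
    (C : Matrix (Fin m ⊕ Fin m) (Fin m ⊕ Fin m) ℝ)
    (hC : C = Matrix.diagonal (Sum.elim c c))
    (ε : ℝ) (hε : 0 < ε) (s Δ : ℝ) (hs : 0 < s) :
    feas ((Fmat s Δ lam) * Φc) ((Fmat s Δ lam).mulVec vc) C
        (ε ^ 2 * s ^ 2 * ∑ k, ‖vc k‖ ^ 2)
      = feas Φc vc C (ε ^ 2 * ∑ k, ‖vc k‖ ^ 2) ∧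
    ∀ xstar : Fin n → ℝ,
      (xstar ∈ feas Φc vc C (ε ^ 2 * ∑ k, ‖vc k‖ ^ 2) ∧
        ∀ y ∈ feas Φc vc C (ε ^ 2 * ∑ k, ‖vc k‖ ^ 2), ∑ i, |xstar i| ≤ ∑ i, |y i|)
      ↔
      (xstar ∈ feas ((Fmat s Δ lam) * Φc) ((Fmat s Δ lam).mulVec vc) C
          (ε ^ 2 * s ^ 2 * ∑ k, ‖vc k‖ ^ 2) ∧
        ∀ y ∈ feas ((Fmat s Δ lam) * Φc) ((Fmat s Δ lam).mulVec vc) C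
          (ε ^ 2 * s ^ 2 * ∑ k, ‖vc k‖ ^ 2), ∑ i, |xstar i| ≤ ∑ i, |y i|) :=
  stmt_4_general Φc vc lam c hc C hC ε s Δ hs
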